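/- arXiv:2206.01084 — 2 statements merged into one kernel-verified Lean document; each statement's English description precedes it below -/
import Mathlib

section
/- The vector of weights w minimizing σ_e² (w − 1_n)ᵀ Σ_q^{-1} (w − 1_n) + σ_u² (wᵀX₂ − tᵀ) D_q (wᵀX₂ − t)ᵀ subject to the exact constraint wᵀX₁ = sᵀ equals w = 1_n + Σ_q X [XᵀΣ_q X + γ diag(0_p, D_q^{-1})]^{-1}(v − Xᵀ1_n), where X = (X₁, X₂), v = (s; t), γ = σ_e²/σ_u², provided XᵀΣ_q X + γ diag(0_p, D_q^{-1}) and X₁ᵀV⁻¹X₁ (with V = σ_e²Σ_q^{-1} + σ_u² X₂ D_q X₂ᵀ) are invertible. -/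
/-!
`J` is a convex quadratic, so a feasible `w⋆` minimizes it on the affine set `{w | X₁ᵀ w = s}`
as soon as its half-gradient `σe² Σq⁻¹ (w⋆ - 1) + σu² X₂ Dq (X₂ᵀ w⋆ - t)` lies in the range of
`X₁` (the Lagrange condition). Write `A⁻¹ (v - Xᵀ 1) = (d₁, d₂)`, so that `w⋆ = 1 + Σq X d`.
Read blockwise, `A d = v - Xᵀ 1` says `X₁ᵀ w⋆ = s` and `X₂ᵀ w⋆ - t = -γ Dq⁻¹ d₂`; since `σu² γ = σe²`,
the half-gradient is then `σe² X₁ d₁`.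
-/

namespace Matrix

variable {m k l : Type*} [Fintype m] [Fintype k] [Fintype l]

lemma PosSemidef.dotProduct_mulVec_add_le {M : Matrix m m ℝ} (hM : M.PosSemidef) (x h : m → ℝ) :
    x ⬝ᵥ M *ᵥ x + 2 * (h ⬝ᵥ M *ᵥ x) ≤ (x + h) ⬝ᵥ M *ᵥ (x + h) := by
  have hsymm : x ⬝ᵥ M *ᵥ h = h ⬝ᵥ M *ᵥ x := by
    rw [dotProduct_mulVec, ← mulVec_transpose, ← conjTranspose_eq_transpose_of_trivial,
      hM.isHermitian.eq, dotProduct_comm]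
  have hh : 0 ≤ h ⬝ᵥ M *ᵥ h := by simpa using hM.dotProduct_mulVec_nonneg h
  simp only [mulVec_add, dotProduct_add, add_dotProduct, hsymm]
  linarith

theorem leastSquares_le_of_stationary {P : Matrix m m ℝ} {Q : Matrix k k ℝ}
    (hP : P.PosSemidef) (hQ : Q.PosSemidef) (C : Matrix k m ℝ) (K : Matrix m l ℝ)
    (a : m → ℝ) (b : k → ℝ) {w₀ w : m → ℝ} (μ : l → ℝ)
    (hstat : P *ᵥ (w₀ - a) + Cᵀ *ᵥ Q *ᵥ (C *ᵥ w₀ - b) = K *ᵥ μ) (hw : Kᵀ *ᵥ w = Kᵀ *ᵥ w₀) :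
    (w₀ - a) ⬝ᵥ P *ᵥ (w₀ - a) + (C *ᵥ w₀ - b) ⬝ᵥ Q *ᵥ (C *ᵥ w₀ - b) ≤
      (w - a) ⬝ᵥ P *ᵥ (w - a) + (C *ᵥ w - b) ⬝ᵥ Q *ᵥ (C *ᵥ w - b) := by
  set h := w - w₀ with hh
  have hcross : h ⬝ᵥ P *ᵥ (w₀ - a) + C *ᵥ h ⬝ᵥ Q *ᵥ (C *ᵥ w₀ - b) = 0 := by
    have hC : C *ᵥ h ⬝ᵥ Q *ᵥ (C *ᵥ w₀ - b) = h ⬝ᵥ Cᵀ *ᵥ Q *ᵥ (C *ᵥ w₀ - b) := by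
      rw [dotProduct_mulVec h, vecMul_transpose]
    rw [hC, ← dotProduct_add, hstat, dotProduct_mulVec, ← mulVec_transpose, hh, mulVec_sub, hw,
      sub_self, zero_dotProduct]
  have h₁ : w - a = (w₀ - a) + h := by rw [hh]; abel
  have h₂ : C *ᵥ w - b = (C *ᵥ w₀ - b) + C *ᵥ h := by rw [hh, mulVec_sub]; abel
  rw [h₁, h₂]
  linarith [hP.dotProduct_mulVec_add_le (w₀ - a) h,
    hQ.dotProduct_mulVec_add_le (C *ᵥ w₀ - b) (C *ᵥ h)]

theorem transpose_mulVec_eq_of_penalized_normal_eq {n : Type*} [Fintype n]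
    (X₁ : Matrix n m ℝ) (X₂ : Matrix n k ℝ) (S : Matrix n n ℝ) (G : Matrix k k ℝ) (γ : ℝ)
    (a : n → ℝ) (s : m → ℝ) (t : k → ℝ) (d₁ : m → ℝ) (d₂ : k → ℝ)
    (hd : ((fromCols X₁ X₂)ᵀ * S * fromCols X₁ X₂ + γ • fromBlocks 0 0 0 G) *ᵥ Sum.elim d₁ d₂ =
      Sum.elim s t - (fromCols X₁ X₂)ᵀ *ᵥ a) :
    X₁ᵀ *ᵥ (a + S *ᵥ (X₁ *ᵥ d₁ + X₂ *ᵥ d₂)) = s ∧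
      X₂ᵀ *ᵥ (a + S *ᵥ (X₁ *ᵥ d₁ + X₂ *ᵥ d₂)) = t - γ • G *ᵥ d₂ := by
  simp only [add_mulVec, ← mulVec_mulVec, fromCols_mulVec_sumElim, transpose_fromCols,
    fromRows_mulVec, smul_mulVec, fromBlocks_mulVec, zero_mulVec, add_zero, zero_add,
    Sum.elim_comp_inr] at hd
  constructor <;> ext i
  · have := congrFun hd (Sum.inl i)
    simp only [mulVec_add, Pi.add_apply, Pi.sub_apply, Pi.smul_apply, Sum.elim_inl,
      Pi.zero_apply, smul_zero] at this ⊢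
    linarith
  · have := congrFun hd (Sum.inr i)
    simp only [mulVec_add, Pi.add_apply, Pi.sub_apply, Pi.smul_apply, Sum.elim_inr,
      smul_eq_mul] at this ⊢
    linarith

end Matrix

open Matrix in
theorem stmt_6_general {n p q : ℕ}
    (X₁ : Matrix (Fin n) (Fin p) ℝ) (X₂ : Matrix (Fin n) (Fin q) ℝ)
    (s : Fin p → ℝ) (t : Fin q → ℝ)
    (Sq : Matrix (Fin n) (Fin n) ℝ) (hS : Sq.PosDef)
    (Dq : Matrix (Fin q) (Fin q) ℝ) (hD : Dq.PosDef)
    (σe2 σu2 : ℝ) (hσe : 0 < σe2) (hσu : 0 < σu2)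
    (γ : ℝ) (hγ : γ = σe2 / σu2)
    (X : Matrix (Fin n) (Fin p ⊕ Fin q) ℝ) (hX : X = Matrix.fromCols X₁ X₂)
    (v : Fin p ⊕ Fin q → ℝ) (hv : v = Sum.elim s t)
    (A : Matrix (Fin p ⊕ Fin q) (Fin p ⊕ Fin q) ℝ)
    (hA : A = Xᵀ * Sq * X + γ • Matrix.fromBlocks 0 0 0 Dq⁻¹)
    (hAinv : IsUnit A.det)
    (J : (Fin n → ℝ) → ℝ)
    (hJ : J = fun w => σe2 * ((w - 1) ⬝ᵥ (Sq⁻¹ *ᵥ (w - 1))) +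
      σu2 * ((X₂ᵀ *ᵥ w - t) ⬝ᵥ (Dq *ᵥ (X₂ᵀ *ᵥ w - t))))
    (wstar : Fin n → ℝ)
    (hw : wstar = 1 + (Sq * X * A⁻¹) *ᵥ (v - Xᵀ *ᵥ 1)) :
    X₁ᵀ *ᵥ wstar = s ∧ ∀ w : Fin n → ℝ, X₁ᵀ *ᵥ w = s → J wstar ≤ J w := by
  subst hX hv hJ
  obtain ⟨d₁, d₂, hd⟩ : ∃ d₁ d₂, A⁻¹ *ᵥ (Sum.elim s t - (fromCols X₁ X₂)ᵀ *ᵥ 1) = Sum.elim d₁ d₂ :=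
    ⟨_, _, (Sum.elim_comp_inl_inr _).symm⟩
  have hwstar : wstar = 1 + Sq *ᵥ (X₁ *ᵥ d₁ + X₂ *ᵥ d₂) := by
    rw [hw, ← mulVec_mulVec, ← mulVec_mulVec, hd, fromCols_mulVec_sumElim]
  obtain ⟨hfeas, hX₂w⟩ := transpose_mulVec_eq_of_penalized_normal_eq X₁ X₂ Sq Dq⁻¹ γ 1 s t d₁ d₂ <| by
    rw [← hA, ← hd, mulVec_mulVec, mul_nonsing_inv _ hAinv, one_mulVec]
  rw [← hwstar] at hfeas hX₂w
  refine ⟨hfeas, fun w hwfeas => ?_⟩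
  have hSq : Sq⁻¹ *ᵥ (wstar - 1) = X₁ *ᵥ d₁ + X₂ *ᵥ d₂ := by
    rw [hwstar, add_sub_cancel_left, mulVec_mulVec,
      nonsing_inv_mul _ ((isUnit_iff_isUnit_det _).mp hS.isUnit), one_mulVec]
  have hDq : Dq *ᵥ (X₂ᵀ *ᵥ wstar - t) = -(γ • d₂) := by
    rw [hX₂w, sub_sub_cancel_left, mulVec_neg, mulVec_smul, mulVec_mulVec,
      mul_nonsing_inv _ ((isUnit_iff_isUnit_det _).mp hD.isUnit), one_mulVec]
  have hstat : (σe2 • Sq⁻¹) *ᵥ (wstar - 1) + X₂ᵀᵀ *ᵥ (σu2 • Dq) *ᵥ (X₂ᵀ *ᵥ wstar - t) =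
      X₁ *ᵥ (σe2 • d₁) := by
    have hγσ : σu2 * γ = σe2 := by rw [hγ]; field_simp
    rw [smul_mulVec, hSq, smul_mulVec, hDq, transpose_transpose]
    simp only [mulVec_smul, mulVec_neg]
    rw [← hγσ]
    module
  have := leastSquares_le_of_stationary (hS.inv.posSemidef.smul hσe.le)
    (hD.posSemidef.smul hσu.le) X₂ᵀ X₁ 1 t (σe2 • d₁) hstat (hwfeas.trans hfeas.symm)
  simpa [smul_mulVec, dotProduct_smul] using this

open Matrix in
theorem stmt_6 {n p q : ℕ}
    (X₁ : Matrix (Fin n) (Fin p) ℝ) (X₂ : Matrix (Fin n) (Fin q) ℝ)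
    (s : Fin p → ℝ) (t : Fin q → ℝ)
    (Sq : Matrix (Fin n) (Fin n) ℝ) (hSd : Sq.IsDiag) (hS : Sq.PosDef)
    (Dq : Matrix (Fin q) (Fin q) ℝ) (hD : Dq.PosDef)
    (σe2 σu2 : ℝ) (hσe : 0 < σe2) (hσu : 0 < σu2)
    (γ : ℝ) (hγ : γ = σe2 / σu2)
    (X : Matrix (Fin n) (Fin p ⊕ Fin q) ℝ) (hX : X = Matrix.fromCols X₁ X₂)
    (v : Fin p ⊕ Fin q → ℝ) (hv : v = Sum.elim s t)
    (A : Matrix (Fin p ⊕ Fin q) (Fin p ⊕ Fin q) ℝ)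
    (hA : A = Xᵀ * Sq * X + γ • Matrix.fromBlocks 0 0 0 Dq⁻¹)
    (hAinv : IsUnit A.det)
    (V : Matrix (Fin n) (Fin n) ℝ)
    (hV : V = σe2 • Sq⁻¹ + σu2 • (X₂ * Dq * X₂ᵀ))
    (hVX : IsUnit (X₁ᵀ * V⁻¹ * X₁).det)
    (J : (Fin n → ℝ) → ℝ)
    (hJ : J = fun w => σe2 * ((w - 1) ⬝ᵥ (Sq⁻¹ *ᵥ (w - 1))) +
      σu2 * ((X₂ᵀ *ᵥ w - t) ⬝ᵥ (Dq *ᵥ (X₂ᵀ *ᵥ w - t))))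
    (wstar : Fin n → ℝ)
    (hw : wstar = 1 + (Sq * X * A⁻¹) *ᵥ (v - Xᵀ *ᵥ 1)) :
    X₁ᵀ *ᵥ wstar = s ∧ ∀ w : Fin n → ℝ, X₁ᵀ *ᵥ w = s → J wstar ≤ J w :=
  stmt_6_general X₁ X₂ s t Sq hS Dq hD σe2 σu2 hσe hσu γ hγ X hX v hv A hA hAinv J hJ wstar hw
end

section
/- Strong duality for calibration: let Q : W → ℝ be strictly convex differentiable on an open interval W, with conjugate g(z) = sup_{w∈W}{zw − Q(w)} attained at w(z) = (Q')^{-1}(z). If ĉ minimizes c ↦ Σ_{i∈S} g(cᵀxᵢ) − ⟨c, T⟩ with vanishing gradient, then the weights ŵᵢ = w(ĉᵀxᵢ) minimize Σ_{i∈S} Q(wᵢ) over all w satisfying Σ_{i∈S} wᵢxᵢ = T. -/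
open Matrix in
theorem stmt_18 {d : ℕ} {ι : Type*} (S : Finset ι) (x : ι → Fin d → ℝ) (T : Fin d → ℝ)
    (W : Set ℝ) (hWopen : IsOpen W) (hWconv : Convex ℝ W)
    (Q r : ℝ → ℝ)
    (hQconv : StrictConvexOn ℝ W Q)
    (hQdiff : DifferentiableOn ℝ Q W)
    (hinv : Set.InvOn r (deriv Q) W (deriv Q '' W))
    (hmaps : Set.MapsTo r (deriv Q '' W) W)
    (hattain : ∀ z ∈ deriv Q '' W,
      IsGreatest ((fun w => z * w - Q w) '' W) (z * r z - Q (r z)))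
    (chat : Fin d → ℝ)
    (hin : ∀ i ∈ S, chat ⬝ᵥ x i ∈ deriv Q '' W)
    (hgrad : ∑ i ∈ S, r (chat ⬝ᵥ x i) • x i = T) :
    ∀ w : ι → ℝ, (∀ i ∈ S, w i ∈ W) → (∑ i ∈ S, w i • x i = T) →
      ∑ i ∈ S, Q (r (chat ⬝ᵥ x i)) ≤ ∑ i ∈ S, Q (w i) := by
  intro w hw hsum
  set z : ι → ℝ := fun i => chat ⬝ᵥ x i with hz
  have key : ∀ i ∈ S, Q (r (z i)) ≤ Q (w i) + z i * (r (z i) - w i) := by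
    intro i hi
    have h := (hattain (z i) (hin i hi)).2 ⟨w i, hw i hi, rfl⟩
    simp only at h
    nlinarith [h]
  have hsum' : ∀ (f : ι → ℝ), ∑ i ∈ S, f i • x i = T →
      ∑ i ∈ S, z i * f i = chat ⬝ᵥ T := by
    intro f hf
    rw [← hf]
    simp only [dotProduct, Finset.sum_apply, Pi.smul_apply, smul_eq_mul,
      Finset.mul_sum]
    rw [Finset.sum_comm]
    refine Finset.sum_congr rfl fun i _ => ?_
    simp only [hz, dotProduct, Finset.sum_mul]
    exact Finset.sum_congr rfl fun j _ => by ring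
  have h1 := hsum' _ hgrad
  have h2 := hsum' _ hsum
  calc ∑ i ∈ S, Q (r (z i)) ≤ ∑ i ∈ S, (Q (w i) + z i * (r (z i) - w i)) :=
        Finset.sum_le_sum key
    _ = ∑ i ∈ S, Q (w i) + (∑ i ∈ S, z i * r (z i) - ∑ i ∈ S, z i * w i) := by
        rw [Finset.sum_add_distrib, ← Finset.sum_sub_distrib]
        congr 1; congr 1; ext i; ring
    _ = ∑ i ∈ S, Q (w i) := by rw [h1, h2]; ring
end
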